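/- arXiv:2511.06410 — 2 statements merged into one kernel-verified Lean document; each statement's English description precedes it below -/
import Mathlib

section
/- Generalized Gronwall inequality: let θ ∈ (0,1], Ψ ≥ 0, and let e, g : [0,1] → [0,∞) be continuous with e(u) ≤ Ψ ∫₀^u (u−w)^{θ−1} e(w) dw + g(u) for all u ∈ [0,1], where g is nonnegative and nondecreasing. Then there exists a constant C depending only on θ and Ψ (not on g) such that e(u) ≤ C g(u) for all u ∈ [0,1]. -/
open MeasureTheory Real Set intervalIntegral

lemma rpow_intble (θ : ℝ) (hθ0 : 0 < θ) (m a b : ℝ) :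
    IntervalIntegrable (fun v => (m - v) ^ (θ - 1)) volume a b := by
  have h := (intervalIntegrable_rpow' (a := m - a) (b := m - b)
      (by linarith : (-1:ℝ) < θ - 1)).comp_sub_left m
  simpa using h

lemma rpow_integral_eval (θ : ℝ) (hθ0 : 0 < θ) (m a : ℝ) (ha : a ≤ m) :
    ∫ v in a..m, (m - v) ^ (θ - 1) = (m - a) ^ θ / θ := by
  rw [intervalIntegral.integral_comp_sub_left (fun x : ℝ => x ^ (θ - 1)) m]
  simp only [sub_self]
  rw [integral_rpow (Or.inl (by linarith : (-1:ℝ) < θ - 1))]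
  rw [Real.zero_rpow (by linarith : θ - 1 + 1 ≠ 0)]
  ring_nf

lemma exp_integral_eval (l a b : ℝ) (hl : l ≠ 0) :
    ∫ v in a..b, Real.exp (l * v) = (Real.exp (l * b) - Real.exp (l * a)) / l := by
  rw [intervalIntegral.integral_comp_mul_left (fun x => Real.exp x) hl]
  rw [integral_exp]
  simp [smul_eq_mul, div_eq_inv_mul]

lemma key_est (θ l w : ℝ) (hθ0 : 0 < θ) (hθ1 : θ ≤ 1) (hl : 1 ≤ l) (hw0 : 0 ≤ w) :
    ∫ v in (0:ℝ)..w, (w - v) ^ (θ - 1) * Real.exp (l * v)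
      ≤ Real.exp (l * w) * ((1/θ + 1) * (1/l) ^ θ) := by
  have hl0 : 0 < l := by linarith
  have hil : 0 < 1/l := by positivity
  have hilθ : (0:ℝ) < (1/l) ^ θ := Real.rpow_pos_of_pos hil θ
  by_cases hcase : w ≤ 1/l
  · -- small w: bound exp by exp(l w)
    have h1 : ∫ v in (0:ℝ)..w, (w - v) ^ (θ - 1) * Real.exp (l * v)
        ≤ ∫ v in (0:ℝ)..w, (w - v) ^ (θ - 1) * Real.exp (l * w) := by
      apply intervalIntegral.integral_mono_on hw0
      · exact (rpow_intble θ hθ0 w 0 w).mul_continuousOn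
          (Real.continuous_exp.comp (continuous_const.mul continuous_id)).continuousOn
      · exact (rpow_intble θ hθ0 w 0 w).mul_continuousOn continuousOn_const
      · intro x hx
        have : Real.exp (l * x) ≤ Real.exp (l * w) := by
          apply Real.exp_le_exp.2
          nlinarith [hx.2]
        exact mul_le_mul_of_nonneg_left this (Real.rpow_nonneg (by linarith [hx.2]) _)
    have h2 : ∫ v in (0:ℝ)..w, (w - v) ^ (θ - 1) * Real.exp (l * w)
        = (w ^ θ / θ) * Real.exp (l * w) := by
      rw [intervalIntegral.integral_mul_const, rpow_integral_eval θ hθ0 w 0 hw0, sub_zero]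
    have h3 : w ^ θ ≤ (1/l) ^ θ := Real.rpow_le_rpow hw0 hcase hθ0.le
    calc ∫ v in (0:ℝ)..w, (w - v) ^ (θ - 1) * Real.exp (l * v)
        ≤ (w ^ θ / θ) * Real.exp (l * w) := by rw [← h2]; exact h1
      _ ≤ Real.exp (l * w) * ((1/θ + 1) * (1/l) ^ θ) := by
          rw [mul_comm]
          apply mul_le_mul_of_nonneg_left _ (Real.exp_pos _).le
          rw [div_eq_mul_one_div, mul_comm (w ^ θ)]
          have : (1/θ) * w ^ θ ≤ (1/θ) * (1/l) ^ θ := by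
            apply mul_le_mul_of_nonneg_left h3 (by positivity)
          nlinarith [Real.rpow_nonneg hil.le θ, this]
  · push_neg at hcase
    set c := w - 1/l with hc
    have hc0 : 0 < c := by rw [hc]; linarith
    have hcw : c < w := by rw [hc]; linarith
    -- split
    have hI1 : IntervalIntegrable (fun v => (w - v) ^ (θ - 1) * Real.exp (l * v)) volume 0 c :=
      (rpow_intble θ hθ0 w 0 c).mul_continuousOn
        (Real.continuous_exp.comp (continuous_const.mul continuous_id)).continuousOn
    have hI2 : IntervalIntegrable (fun v => (w - v) ^ (θ - 1) * Real.exp (l * v)) volume c w :=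
      (rpow_intble θ hθ0 w c w).mul_continuousOn
        (Real.continuous_exp.comp (continuous_const.mul continuous_id)).continuousOn
    rw [← intervalIntegral.integral_add_adjacent_intervals hI1 hI2]
    -- far piece
    have far : ∫ v in (0:ℝ)..c, (w - v) ^ (θ - 1) * Real.exp (l * v)
        ≤ Real.exp (l * w) * ((1/l) ^ θ) := by
      have step1 : ∫ v in (0:ℝ)..c, (w - v) ^ (θ - 1) * Real.exp (l * v)
          ≤ ∫ v in (0:ℝ)..c, (1/l) ^ (θ - 1) * Real.exp (l * v) := by
        apply intervalIntegral.integral_mono_on hc0.le hI1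
        · exact intervalIntegrable_const.mul_continuousOn
            (Real.continuous_exp.comp (continuous_const.mul continuous_id)).continuousOn
        · intro x hx
          have hx2 := hx.2
          rw [hc] at hx2
          have hwx : 1/l ≤ w - x := by linarith
          have : (w - x) ^ (θ - 1) ≤ (1/l) ^ (θ - 1) :=
            Real.rpow_le_rpow_of_nonpos hil hwx (by linarith)
          exact mul_le_mul_of_nonneg_right this (Real.exp_pos _).le
      have step2 : ∫ v in (0:ℝ)..c, (1/l) ^ (θ - 1) * Real.exp (l * v)
          = (1/l) ^ (θ - 1) * ((Real.exp (l * c) - Real.exp (l * 0)) / l) := by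
        rw [intervalIntegral.integral_const_mul, exp_integral_eval l 0 c hl0.ne']
      have step3 : (1/l) ^ (θ - 1) * ((Real.exp (l * c) - Real.exp (l * 0)) / l)
          ≤ Real.exp (l * w) * (1/l) ^ θ := by
        have hpow : (1/l) ^ (θ - 1) * (1/l) = (1/l) ^ θ := by
          have h := Real.rpow_add hil (θ - 1) 1
          rw [Real.rpow_one] at h
          rw [← h]; norm_num
        have h1 : (Real.exp (l * c) - Real.exp (l * 0)) / l ≤ Real.exp (l * w) * (1/l) := by
          rw [div_eq_mul_one_div]
          apply mul_le_mul_of_nonneg_right _ hil.le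
          have := Real.exp_pos (l * 0)
          have : Real.exp (l * c) ≤ Real.exp (l * w) :=
            Real.exp_le_exp.2 (by nlinarith [hcw])
          linarith [Real.exp_pos (l * 0)]
        calc (1/l) ^ (θ - 1) * ((Real.exp (l * c) - Real.exp (l * 0)) / l)
            ≤ (1/l) ^ (θ - 1) * (Real.exp (l * w) * (1/l)) :=
              mul_le_mul_of_nonneg_left h1 (Real.rpow_nonneg hil.le _)
          _ = Real.exp (l * w) * ((1/l) ^ (θ - 1) * (1/l)) := by ring
          _ = Real.exp (l * w) * (1/l) ^ θ := by rw [hpow]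
      calc ∫ v in (0:ℝ)..c, (w - v) ^ (θ - 1) * Real.exp (l * v)
          ≤ ∫ v in (0:ℝ)..c, (1/l) ^ (θ - 1) * Real.exp (l * v) := step1
        _ = (1/l) ^ (θ - 1) * ((Real.exp (l * c) - Real.exp (l * 0)) / l) := step2
        _ ≤ Real.exp (l * w) * (1/l) ^ θ := step3
    -- near piece
    have near : ∫ v in c..w, (w - v) ^ (θ - 1) * Real.exp (l * v)
        ≤ Real.exp (l * w) * ((1/θ) * (1/l) ^ θ) := by
      have step1 : ∫ v in c..w, (w - v) ^ (θ - 1) * Real.exp (l * v)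
          ≤ ∫ v in c..w, (w - v) ^ (θ - 1) * Real.exp (l * w) := by
        apply intervalIntegral.integral_mono_on hcw.le hI2
        · exact (rpow_intble θ hθ0 w c w).mul_continuousOn continuousOn_const
        · intro x hx
          have : Real.exp (l * x) ≤ Real.exp (l * w) :=
            Real.exp_le_exp.2 (by nlinarith [hx.2])
          exact mul_le_mul_of_nonneg_left this (Real.rpow_nonneg (by linarith [hx.2]) _)
      have step2 : ∫ v in c..w, (w - v) ^ (θ - 1) * Real.exp (l * w)
          = ((w - c) ^ θ / θ) * Real.exp (l * w) := by
        rw [intervalIntegral.integral_mul_const, rpow_integral_eval θ hθ0 w c hcw.le]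
      have hwc : w - c = 1/l := by rw [hc]; ring
      calc ∫ v in c..w, (w - v) ^ (θ - 1) * Real.exp (l * v)
          ≤ ((w - c) ^ θ / θ) * Real.exp (l * w) := step2 ▸ step1
        _ = Real.exp (l * w) * ((1/θ) * (1/l) ^ θ) := by
            rw [hwc]; ring
    linarith [far, near]

lemma gronwall_aux (θ Ψ l : ℝ) (hθ0 : 0 < θ) (hθ1 : θ ≤ 1) (hΨ : 0 ≤ Ψ)
    (hl1 : 1 ≤ l) (hl2 : Ψ * ((1/θ + 1) * (1/l) ^ θ) ≤ 1/2)
    (e : ℝ → ℝ) (he : ContinuousOn e (Set.Icc 0 1))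
    (he0 : ∀ u ∈ Set.Icc (0:ℝ) 1, 0 ≤ e u)
    (u₀ : ℝ) (hu₀ : u₀ ∈ Set.Icc (0:ℝ) 1) (δ : ℝ) (hδ : 0 ≤ δ)
    (hyp : ∀ u ∈ Set.Icc (0:ℝ) u₀,
      e u ≤ Ψ * (∫ w in (0:ℝ)..u, (u - w) ^ (θ - 1) * e w) + δ) :
    e u₀ ≤ 2 * Real.exp l * δ := by
  obtain ⟨hu0, hu1⟩ := hu₀
  have hl0 : 0 < l := lt_of_lt_of_le one_pos hl1
  have hsub : Set.Icc (0:ℝ) u₀ ⊆ Set.Icc 0 1 := Set.Icc_subset_Icc le_rfl hu1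
  set F : ℝ → ℝ := fun v => e v * Real.exp (-(l * v)) with hF
  have hFc : ContinuousOn F (Set.Icc 0 u₀) :=
    (he.mono hsub).mul
      ((Real.continuous_exp.comp ((continuous_const.mul continuous_id).neg)).continuousOn)
  obtain ⟨m, hm, hmax⟩ := isCompact_Icc.exists_isMaxOn (Set.nonempty_Icc.2 hu0) hFc
  obtain ⟨hm0, hmu⟩ := hm
  have hS0 : 0 ≤ F m := mul_nonneg (he0 m (hsub ⟨hm0, hmu⟩)) (Real.exp_pos _).le
  -- pointwise bound from the max
  have hptw : ∀ v ∈ Set.Icc (0:ℝ) u₀, e v ≤ F m * Real.exp (l * v) := by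
    intro v hv
    have h1 : F v ≤ F m := hmax hv
    have h2 : e v = F v * Real.exp (l * v) := by
      rw [hF]
      simp only [Real.exp_neg]
      field_simp
    rw [h2]
    exact mul_le_mul_of_nonneg_right h1 (Real.exp_pos _).le
  -- integral comparison at m
  have hecont : ContinuousOn e (Set.uIcc 0 m) := by
    rw [Set.uIcc_of_le hm0]
    exact he.mono (Set.Icc_subset_Icc le_rfl (le_trans hmu hu1))
  have hIe : IntervalIntegrable (fun w => (m - w) ^ (θ - 1) * e w) volume 0 m :=
    (rpow_intble θ hθ0 m 0 m).mul_continuousOn hecont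
  have hIexp : IntervalIntegrable
      (fun w => (m - w) ^ (θ - 1) * (F m * Real.exp (l * w))) volume 0 m :=
    (rpow_intble θ hθ0 m 0 m).mul_continuousOn
      (continuous_const.mul
        (Real.continuous_exp.comp (continuous_const.mul continuous_id))).continuousOn
  have hmono : (∫ w in (0:ℝ)..m, (m - w) ^ (θ - 1) * e w)
      ≤ ∫ w in (0:ℝ)..m, (m - w) ^ (θ - 1) * (F m * Real.exp (l * w)) := by
    apply intervalIntegral.integral_mono_on hm0 hIe hIexp
    intro x hx
    exact mul_le_mul_of_nonneg_left
      (hptw x ⟨hx.1, le_trans hx.2 hmu⟩)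
      (Real.rpow_nonneg (sub_nonneg.2 hx.2) _)
  have hpull : (∫ w in (0:ℝ)..m, (m - w) ^ (θ - 1) * (F m * Real.exp (l * w)))
      = F m * ∫ w in (0:ℝ)..m, (m - w) ^ (θ - 1) * Real.exp (l * w) := by
    rw [← intervalIntegral.integral_const_mul]
    congr 1
    ext w
    ring
  have hest : (∫ w in (0:ℝ)..m, (m - w) ^ (θ - 1) * Real.exp (l * w))
      ≤ Real.exp (l * m) * ((1/θ + 1) * (1/l) ^ θ) :=
    key_est θ l m hθ0 hθ1 hl1 hm0
  have hint : (∫ w in (0:ℝ)..m, (m - w) ^ (θ - 1) * e w)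
      ≤ F m * (Real.exp (l * m) * ((1/θ + 1) * (1/l) ^ θ)) := by
    calc (∫ w in (0:ℝ)..m, (m - w) ^ (θ - 1) * e w)
        ≤ F m * ∫ w in (0:ℝ)..m, (m - w) ^ (θ - 1) * Real.exp (l * w) := hpull ▸ hmono
      _ ≤ F m * (Real.exp (l * m) * ((1/θ + 1) * (1/l) ^ θ)) :=
          mul_le_mul_of_nonneg_left hest hS0
  -- derive bound on F m * exp (l m)
  have heqm : e m = F m * Real.exp (l * m) := by
    rw [hF]
    simp only [Real.exp_neg]
    field_simp
  have hKpos : 0 ≤ (1/θ + 1) * (1/l) ^ θ := by positivity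
  have hem := hyp m ⟨hm0, hmu⟩
  have hmain : e m ≤ (1/2) * e m + δ := by
    calc e m ≤ Ψ * (∫ w in (0:ℝ)..m, (m - w) ^ (θ - 1) * e w) + δ := hem
      _ ≤ Ψ * (F m * (Real.exp (l * m) * ((1/θ + 1) * (1/l) ^ θ))) + δ := by
          have := mul_le_mul_of_nonneg_left hint hΨ
          linarith
      _ = (Ψ * ((1/θ + 1) * (1/l) ^ θ)) * (F m * Real.exp (l * m)) + δ := by ring
      _ ≤ (1/2) * (F m * Real.exp (l * m)) + δ := by
          have hpos : 0 ≤ F m * Real.exp (l * m) := mul_nonneg hS0 (Real.exp_pos _).le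
          nlinarith [mul_le_mul_of_nonneg_right hl2 hpos]
      _ = (1/2) * e m + δ := by rw [← heqm]
  have hFS : F m * Real.exp (l * m) ≤ 2 * δ := by rw [← heqm]; linarith
  have hFm : F m ≤ 2 * δ := by
    have h1 : (1:ℝ) ≤ Real.exp (l * m) := Real.one_le_exp (by positivity)
    nlinarith
  -- conclude
  have h2 : e u₀ ≤ F m * Real.exp (l * u₀) := hptw u₀ ⟨hu0, le_rfl⟩
  have h3 : Real.exp (l * u₀) ≤ Real.exp l :=
    Real.exp_le_exp.2 (by nlinarith)
  calc e u₀ ≤ F m * Real.exp (l * u₀) := h2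
    _ ≤ (2 * δ) * Real.exp l :=
        mul_le_mul hFm h3 (Real.exp_pos _).le (by linarith)
    _ = 2 * Real.exp l * δ := by ring

theorem generalized_gronwall (θ : ℝ) (hθ : θ ∈ Set.Ioc (0:ℝ) 1) (Ψ : ℝ) (hΨ : 0 ≤ Ψ) :
    ∃ C : ℝ, ∀ e g : ℝ → ℝ,
      ContinuousOn e (Set.Icc 0 1) → ContinuousOn g (Set.Icc 0 1) →
      (∀ u ∈ Set.Icc (0:ℝ) 1, 0 ≤ e u) →
      (∀ u ∈ Set.Icc (0:ℝ) 1, 0 ≤ g u) →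
      MonotoneOn g (Set.Icc 0 1) →
      (∀ u ∈ Set.Icc (0:ℝ) 1,
        e u ≤ Ψ * (∫ w in (0:ℝ)..u, (u - w) ^ (θ - 1) * e w) + g u) →
      ∀ u ∈ Set.Icc (0:ℝ) 1, e u ≤ C * g u := by
  obtain ⟨hθ0, hθ1⟩ := hθ
  have hA : 0 ≤ Ψ * (1/θ + 1) := by positivity
  set l : ℝ := (1 + 2 * Ψ * (1/θ + 1)) ^ (1/θ) with hl
  have hbpos : (0:ℝ) < 1 + 2 * Ψ * (1/θ + 1) := by linarith
  have hl1 : 1 ≤ l := Real.one_le_rpow (by linarith) (by positivity)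
  have hl0 : 0 < l := lt_of_lt_of_le one_pos hl1
  have hlθ : l ^ θ = 1 + 2 * Ψ * (1/θ + 1) := by
    rw [hl, ← Real.rpow_mul hbpos.le, one_div_mul_cancel hθ0.ne', Real.rpow_one]
  have hl2 : Ψ * ((1/θ + 1) * (1/l) ^ θ) ≤ 1/2 := by
    have h1 : (1/l) ^ θ = 1 / l ^ θ := by
      rw [one_div, Real.inv_rpow hl0.le, one_div]
    rw [h1, hlθ]
    rw [show Ψ * ((1/θ + 1) * (1 / (1 + 2 * Ψ * (1/θ + 1))))
        = (Ψ * (1/θ + 1)) / (1 + 2 * Ψ * (1/θ + 1)) by ring,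
      div_le_iff₀ hbpos]
    linarith
  refine ⟨2 * Real.exp l, ?_⟩
  intro e g he hg he0 hg0 hgmono hyp u hu
  have hC : (0:ℝ) < 2 * Real.exp l := by positivity
  refine le_of_forall_pos_le_add ?_
  intro ε hε
  have hgu : 0 ≤ g u := hg0 u hu
  have hδ : 0 ≤ g u + ε / (2 * Real.exp l) := by positivity
  have key := gronwall_aux θ Ψ l hθ0 hθ1 hΨ hl1 hl2 e he he0 u hu
      (g u + ε / (2 * Real.exp l)) hδ ?_
  · calc e u ≤ 2 * Real.exp l * (g u + ε / (2 * Real.exp l)) := key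
      _ = 2 * Real.exp l * g u + ε := by field_simp
  · intro v hv
    have hv1 : v ∈ Set.Icc (0:ℝ) 1 := ⟨hv.1, le_trans hv.2 hu.2⟩
    have hgv : g v ≤ g u := hgmono hv1 hu hv.2
    have hεC : 0 ≤ ε / (2 * Real.exp l) := by positivity
    calc e v ≤ Ψ * (∫ w in (0:ℝ)..v, (v - w) ^ (θ - 1) * e w) + g v := hyp v hv1
      _ ≤ Ψ * (∫ w in (0:ℝ)..v, (v - w) ^ (θ - 1) * e w)
          + (g u + ε / (2 * Real.exp l)) := by linarith
end

section
/- Let G be an n×n real matrix with G_{jj} = 1 − ε_{jj} and G_{jr} = −ε_{jr} for r ≠ j, where all ε_{jr} ≥ 0 satisfy Σ_{r=1}^n ε_{jr} ≤ 1/2 for each j. If e, H ∈ ℝ^n have nonnegative entries and Ge ≤ H componentwise, then e_j ≤ 2 (H_j + max_r H_r) for all j; in particular each e_j is bounded by a constant multiple of max_r H_r. -/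
/-!
Evaluate the `j₀`-th inequality at an index `j₀` where `e` is maximal: the off-diagonal part is
at most `(∑ r, ε j₀ r) * e j₀ ≤ e j₀ / 2`, so `e j₀ ≤ 2 * H j₀ ≤ 2 * max H` (trivially so if `e j₀ < 0`,
as `H ≥ 0`), and every `e j` is bounded by `e j₀`.
-/

open Finset

theorem sum_mul_le_mul_of_sum_le {ι R : Type*} [Semiring R] [PartialOrder R] [IsOrderedRing R]
    {s : Finset ι} {w f : ι → R} {c M : R} (hw : ∀ i ∈ s, 0 ≤ w i)
    (hw_sum : ∑ i ∈ s, w i ≤ c) (hf : ∀ i ∈ s, f i ≤ M) (hM : 0 ≤ M) :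
    ∑ i ∈ s, w i * f i ≤ c * M :=
  calc ∑ i ∈ s, w i * f i ≤ ∑ i ∈ s, w i * M :=
        sum_le_sum fun i hi => mul_le_mul_of_nonneg_left (hf i hi) (hw i hi)
    _ = (∑ i ∈ s, w i) * M := (sum_mul s w M).symm
    _ ≤ c * M := mul_le_mul_of_nonneg_right hw_sum hM

theorem diagonally_dominant_bound_general (n : ℕ) (hn : 0 < n)
    (ε : Fin n → Fin n → ℝ) (hε : ∀ j r, 0 ≤ ε j r)
    (hrow : ∀ j, ∑ r, ε j r ≤ 1 / 2)
    (e H : Fin n → ℝ) (hH : ∀ j, 0 ≤ H j)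
    (hGe : ∀ j, e j - ∑ r, ε j r * e r ≤ H j) :
    ∀ j, e j ≤ 2 * (H j +
      Finset.univ.sup' (Finset.univ_nonempty_iff.mpr ⟨⟨0, hn⟩⟩) H) := by
  intro j
  have : Nonempty (Fin n) := ⟨⟨0, hn⟩⟩
  obtain ⟨j₀, he_max⟩ := Finite.exists_max e
  have hH_max : H j₀ ≤ univ.sup' (univ_nonempty_iff.mpr ⟨⟨0, hn⟩⟩) H := le_sup' H (mem_univ j₀)
  have he_j₀ : e j₀ ≤ 2 * H j₀ := by
    rcases le_or_gt 0 (e j₀) with he_nonneg | he_neg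
    · have := sum_mul_le_mul_of_sum_le (fun r _ => hε j₀ r) (hrow j₀) (fun r _ => he_max r)
        he_nonneg
      linarith [hGe j₀]
    · linarith [hH j₀]
  linarith [he_max j, hH j]

theorem diagonally_dominant_bound (n : ℕ) (hn : 0 < n)
    (ε : Fin n → Fin n → ℝ) (hε : ∀ j r, 0 ≤ ε j r)
    (hrow : ∀ j, ∑ r, ε j r ≤ 1 / 2)
    (e H : Fin n → ℝ) (he : ∀ j, 0 ≤ e j) (hH : ∀ j, 0 ≤ H j)
    (hGe : ∀ j, e j - ∑ r, ε j r * e r ≤ H j) :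
    ∀ j, e j ≤ 2 * (H j +
      Finset.univ.sup' (Finset.univ_nonempty_iff.mpr ⟨⟨0, hn⟩⟩) H) :=
  diagonally_dominant_bound_general n hn ε hε hrow e H hH hGe
end
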